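/- arXiv:2206.05529 — 4 statements merged into one kernel-verified Lean document; each statement's English description precedes it below -/
import Mathlib

section
/- The discriminant of the trinomial F(x) = x^6 + a x^5 + b, where a and b are integers, equals -b^4(6^6 b - 5^5 a^6). -/
/-!
`sylvester f g m n` is Mathlib's `Polynomial.sylvester` transposed, with the order of
rows and columns reversed, so the two resultants agree. For `F = X^(n+2) + a X^(n+1) + b` the
derivative factors as `F' = X^n ((n+2) X + (n+1) a)`, and multiplicativity of the resultant gives
`Res(F, F') = Res(F, X^n) · Res(F, (n+2) X + (n+1) a)`
`           = (-1)^n b^n · (-(n+2))^(n+2) F(-(n+1)a/(n+2))`.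
-/

open Polynomial Matrix

/-- The Sylvester matrix of `f` and `g`, regarded as polynomials of degree (at most)
`m` and `n` respectively: an `(n + m) × (n + m)` matrix whose first `n` rows are the
shifted coefficient vectors of `f` and whose last `m` rows are the shifted coefficient
vectors of `g`. -/
noncomputable def sylvester (f g : Polynomial ℤ) (m n : ℕ) :
    Matrix (Fin (n + m)) (Fin (n + m)) ℤ :=
  Matrix.of fun i j =>
    if (i : ℕ) < n then
      (if (i : ℕ) ≤ (j : ℕ) ∧ (j : ℕ) ≤ (i : ℕ) + m then f.coeff (m + i - j) else 0)
    else
      (if (i : ℕ) - n ≤ (j : ℕ) ∧ (j : ℕ) ≤ ((i : ℕ) - n) + n then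
        g.coeff (n + ((i : ℕ) - n) - j) else 0)

/-- The resultant of `f` (of degree `m`) and `g` (of degree `n`). -/
noncomputable def resultant (f g : Polynomial ℤ) (m n : ℕ) : ℤ :=
  (_root_.sylvester f g m n).det

/-- The discriminant of a monic polynomial of degree 6, defined via the resultant of
`F` and its derivative: `disc F = (-1)^(6*5/2) * Res(F, F')`. -/
noncomputable def disc6 (F : Polynomial ℤ) : ℤ :=
  (-1 : ℤ) ^ (6 * 5 / 2) * _root_.resultant F (derivative F) 6 5

theorem sylvester_eq_reindex_transpose_sylvester (f g : ℤ[X]) (m n : ℕ) :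
    _root_.sylvester f g m n =
      (Polynomial.sylvester f g m n)ᵀ.reindex (Fin.revPerm.trans (finCongr (add_comm m n)))
        (Fin.revPerm.trans (finCongr (add_comm m n))) := by
  ext i j
  simp only [_root_.sylvester, Polynomial.sylvester, Fin.addCases, Matrix.reindex_apply,
    Matrix.submatrix_apply, Matrix.transpose_apply, Matrix.of_apply, Equiv.symm_trans_apply,
    finCongr_symm, finCongr_apply, Fin.revPerm_symm, Fin.revPerm_apply, Fin.val_rev, Fin.val_cast,
    Fin.val_castLT, Fin.val_subNat, Set.mem_Icc, eq_rec_constant]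
  have hi := i.isLt
  have hj := j.isLt
  split_ifs <;> first | rfl | omega | (congr 1; omega)

theorem resultant_eq_polynomial_resultant (f g : ℤ[X]) (m n : ℕ) :
    _root_.resultant f g m n = Polynomial.resultant f g m n := by
  rw [_root_.resultant, sylvester_eq_reindex_transpose_sylvester, det_reindex_self, det_transpose,
    Polynomial.resultant]

theorem Polynomial.resultant_C_mul_X_add_C_right {K : Type*} [Field K] (f : K[X]) (m : ℕ)
    (hf : f.natDegree ≤ m) {c : K} (hc : c ≠ 0) (d : K) :
    f.resultant (C c * X + C d) m 1 = (-c) ^ m * f.eval (-d / c) := by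
  have : C c * X + C d = C c * (X + C (d / c)) := by
    rw [mul_add, ← C_mul, mul_div_cancel₀ _ hc]
  rw [this, resultant_C_mul_right, resultant_X_add_C_right _ _ _ hf, neg_pow, neg_div]
  ring

theorem natDegree_trinomial_le {R : Type*} [CommRing R] (n : ℕ) (a b : R) :
    (X ^ (n + 2) + C a * X ^ (n + 1) + C b).natDegree ≤ n + 2 := by
  compute_degree

theorem derivative_trinomial {R : Type*} [CommRing R] (n : ℕ) (a b : R) :
    derivative (X ^ (n + 2) + C a * X ^ (n + 1) + C b) =
      X ^ n * (C ((n : R) + 2) * X + C ((n + 1) * a)) := by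
  simp only [derivative_C_mul, derivative_X_pow, derivative_C,
    add_tsub_cancel_right, map_add, map_mul, map_natCast, map_ofNat, map_one, Nat.cast_add,
    Nat.cast_ofNat, Nat.cast_one, Nat.add_succ_sub_one]
  ring

theorem resultant_trinomial_C_mul_X_add_C (n : ℕ) (a b : ℤ) :
    (X ^ (n + 2) + C a * X ^ (n + 1) + C b).resultant (C ((n : ℤ) + 2) * X + C ((n + 1) * a))
      (n + 2) 1 = (-1) ^ n * (n + 2) ^ (n + 2) * b - (n + 1) ^ (n + 1) * a ^ (n + 2) := by
  have hF : (X ^ (n + 2) + C a * X ^ (n + 1) + C b).map (Int.castRingHom ℚ) =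
      X ^ (n + 2) + C (a : ℚ) * X ^ (n + 1) + C (b : ℚ) := by simp
  have hL : (C ((n : ℤ) + 2) * X + C ((n + 1) * a)).map (Int.castRingHom ℚ) =
      C ((n : ℚ) + 2) * X + C ((n + 1) * (a : ℚ)) := by simp [C_ofNat]
  apply (Int.castRingHom ℚ).injective_int
  rw [← resultant_map_map, hF, hL,
    resultant_C_mul_X_add_C_right _ _ (natDegree_trinomial_le n _ _) (by positivity)]
  have hx : -((n : ℚ) + 2) * (-((n + 1) * a) / (n + 2)) = (n + 1) * a := by field_simp
  generalize -((n + 1) * (a : ℚ)) / (n + 2) = x at hx ⊢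
  have h₁ :
      (-((n : ℚ) + 2)) ^ (n + 2) * x ^ (n + 2) = ((n : ℚ) + 1) ^ (n + 2) * a ^ (n + 2) := by
    rw [← mul_pow, hx, mul_pow]
  have h₂ :
      (-((n : ℚ) + 2)) ^ (n + 1) * x ^ (n + 1) = ((n : ℚ) + 1) ^ (n + 1) * a ^ (n + 1) := by
    rw [← mul_pow, hx, mul_pow]
  simp only [eval_add, eval_mul, eval_pow, eval_X, eval_C, eq_intCast]
  push_cast
  linear_combination h₁ - (n + 2) * a * h₂ + b * neg_pow ((n : ℚ) + 2) (n + 2)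

theorem resultant_trinomial_derivative (n : ℕ) (a b : ℤ) :
    (X ^ (n + 2) + C a * X ^ (n + 1) + C b).resultant
        (derivative (X ^ (n + 2) + C a * X ^ (n + 1) + C b)) (n + 2) (n + 1) =
      b ^ n * ((n + 2) ^ (n + 2) * b - (-1) ^ n * (n + 1) ^ (n + 1) * a ^ (n + 2)) := by
  have hF := natDegree_trinomial_le n a b
  have hL : (C ((n : ℤ) + 2) * X + C ((n + 1) * a)).natDegree = 1 :=
    natDegree_linear (by positivity)
  have hmul := resultant_mul_right _ (X ^ n) (C ((n : ℤ) + 2) * X + C ((n + 1) * a)) _ hF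
  have hb : (X ^ (n + 2) + C a * X ^ (n + 1) + C b).coeff 0 = b := by simp
  have hsign : ((-1 : ℤ) ^ n) ^ 2 = 1 := by rw [← pow_mul, pow_mul', neg_one_sq, one_pow]
  rw [natDegree_X_pow, hL] at hmul
  rw [derivative_trinomial, hmul, resultant_X_pow_right _ _ _ hF,
    resultant_trinomial_C_mul_X_add_C, hb, show (n + 2) * n = n * (n + 1) + n by ring, pow_add,
    (Nat.even_mul_succ_self n).neg_one_pow]
  linear_combination (b ^ n * (n + 2) ^ (n + 2) * b) * hsign

/-- The discriminant of the trinomial `x^6 + a x^5 + b` equals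
`-b^4 (6^6 b - 5^5 a^6)`. -/
theorem disc_trinomial (a b : ℤ) :
    disc6 (X ^ 6 + C a * X ^ 5 + C b) =
      -b ^ 4 * (6 ^ 6 * b - 5 ^ 5 * a ^ 6) := by
  have h := resultant_trinomial_derivative 4 a b
  norm_num at h
  rw [disc6, resultant_eq_polynomial_resultant, h]
  ring
end

section
/- Let K be a number field of degree 6. If there exist at least three distinct prime ideals of the ring of integers of K lying above 2 with residue degree 2, then 2 divides i(K), the gcd of the indices (Z_K : ℤ[α]) over all integral primitive elements α of K; in particular K is not monogenic. -/
/-!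
If `2 ∤ (𝓞 K : ℤ[α])`, then `ℤ[α] + 2 𝓞 K = 𝓞 K`, so `ℤ[X] → 𝓞 K ⧸ P` is onto for every prime
`P ∣ 2` and such a prime is determined by its preimage in `ℤ[X]`. When `P` has residue degree `2`
this preimage is the kernel of a surjection `ℤ[X] → 𝔽₄`, which can only be `(2, X² + X + 1)`:
`X` must map to a root of the unique irreducible quadratic over `𝔽₂`. Hence two distinct primes
of residue degree `2` above `2` force `2 ∣ (𝓞 K : ℤ[α])` for every `α`.
-/

open NumberField Polynomial

/-- The index `(Z_K : ℤ[α])` of the subring generated by `α` in the ring of integers. -/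
noncomputable def subindex {K : Type*} [Field K] [NumberField K] (α : 𝓞 K) : ℕ :=
  ((Algebra.adjoin ℤ ({α} : Set (𝓞 K))).toSubmodule.toAddSubgroup).index

/-- The set of indices of integral primitive elements of `K`. -/
def indexSet (K : Type*) [Field K] [NumberField K] : Set ℤ :=
  {n : ℤ | ∃ α : 𝓞 K, Algebra.adjoin ℚ ({(α : K)} : Set K) = ⊤ ∧
    n = (subindex α : ℤ)}

/-- The index `i(K)` of the number field `K`: the gcd of the indices of all
integral primitive elements, realized as the nonnegative generator of the ideal
of `ℤ` generated by these indices. -/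
noncomputable def fieldIndex (K : Type*) [Field K] [NumberField K] : ℕ :=
  (@Submodule.IsPrincipal.generator ℤ ℤ _ _ _ (Ideal.span (indexSet K))
    (IsPrincipalIdealRing.principal _)).natAbs

/-- A number field is monogenic if its ring of integers is generated by one element. -/
def IsMonogenic (K : Type*) [Field K] [NumberField K] : Prop :=
  ∃ α : 𝓞 K, Algebra.adjoin ℤ ({α} : Set (𝓞 K)) = ⊤

theorem AddSubgroup.exists_add_nsmul_of_coprime_index {G : Type*} [AddCommGroup G]
    (H : AddSubgroup G) {n : ℕ} (hn : n.Coprime H.index) (x : G) :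
    ∃ h ∈ H, ∃ y : G, x = h + n • y := by
  obtain ⟨u, v, huv⟩ := Nat.isCoprime_iff_coprime.mpr hn
  refine ⟨v • H.index • x, H.zsmul_mem (H.nsmul_index_mem x) v, u • x, ?_⟩
  calc x = (u * n + v * H.index : ℤ) • x := by rw [huv, one_smul]
    _ = _ := by module

theorem Ideal.eq_of_comap_eq_of_surjective_quotientMk_comp {R S : Type*} [CommRing R]
    [CommRing S] (g : R →+* S) {I P Q : Ideal S}
    (hg : Function.Surjective ((Ideal.Quotient.mk I).comp g)) (hP : I ≤ P) (hQ : I ≤ Q)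
    (h : P.comap g = Q.comap g) : P = Q := by
  have mem_iff {J : Ideal S} (hJ : I ≤ J) (x : S) (r : R) (hr : x - g r ∈ I) :
      x ∈ J ↔ r ∈ J.comap g :=
    ⟨fun hx => by simpa using J.sub_mem hx (hJ hr),
      fun hr' => by simpa using J.add_mem hr' (hJ hr)⟩
  ext x
  obtain ⟨r, hr⟩ := hg (Ideal.Quotient.mk I x)
  have hr : x - g r ∈ I := Ideal.Quotient.eq.mp hr.symm
  rw [mem_iff hP x r hr, mem_iff hQ x r hr, h]

theorem Polynomial.isMaximal_span_C_two_X_sq_add_X_add_one :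
    (Ideal.span {C 2, X ^ 2 + X + 1} : Ideal ℤ[X]).IsMaximal := by
  set π := mapRingHom (Int.castRingHom (ZMod 2))
  have hπ : Function.Surjective π := map_surjective _ ZMod.intCast_surjective
  have hker : RingHom.ker π = Ideal.span {C 2} := by
    rw [ker_mapRingHom, ZMod.ker_intCastRingHom, Ideal.map_span, Set.image_singleton]
    rfl
  have hirr : Irreducible (X ^ 2 + X + 1 : (ZMod 2)[X]) := by
    refine irreducible_of_degree_le_three_of_not_isRoot ?_ ?_
    · rw [show (X ^ 2 + X + 1 : (ZMod 2)[X]).natDegree = 2 by compute_degree!]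
      decide
    · intro x
      rw [IsRoot.def, eval_add, eval_add, eval_pow, eval_X, eval_one]
      fin_cases x <;> decide
  have := PrincipalIdealRing.isMaximal_of_irreducible hirr
  have hmax := Ideal.comap_isMaximal_of_surjective π hπ (K := Ideal.span {X ^ 2 + X + 1})
  have hmap : Ideal.span {X ^ 2 + X + 1} = (Ideal.span {X ^ 2 + X + 1} : Ideal ℤ[X]).map π := by
    simp [Ideal.map_span, π]
  rwa [hmap, Ideal.comap_map_of_surjective' π hπ, hker, sup_comm, ← Ideal.span_union,
    Set.singleton_union] at hmax

theorem natCard_le_of_surjective_intCast {R : Type*} [Ring R] (p : ℕ) [NeZero p] [CharP R p]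
    (h : Function.Surjective (Int.cast : ℤ → R)) : Nat.card R ≤ p := by
  have hcomp : (ZMod.castHom (dvd_refl p) R).comp (Int.castRingHom (ZMod p)) =
      Int.castRingHom R := RingHom.ext_int _ _
  have hsurj : Function.Surjective (ZMod.castHom (dvd_refl p) R) :=
    Function.Surjective.of_comp (g := Int.castRingHom (ZMod p))
      (by rwa [← RingHom.coe_comp, hcomp])
  simpa using Nat.card_le_card_of_surjective _ hsurj

theorem sq_add_self_add_one_eq_zero_of_surjective {F : Type*} [Field F] [CharP F 2]
    (hF : Nat.card F = 4) {f : ℤ[X] →+* F} (hf : Function.Surjective f) :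
    f X ^ 2 + f X + 1 = 0 := by
  have : Fintype F := @Fintype.ofFinite F (Nat.finite_of_card_ne_zero (by omega))
  have hpow : f X ^ 4 = f X := by
    simpa [← Nat.card_eq_fintype_card, hF] using FiniteField.pow_card (f X)
  -- Otherwise `f X ∈ {0, 1}` and `f` factors through `ℤ`, whose image in `F` is `𝔽₂`.
  by_contra hne
  have hidem : IsIdempotentElem (f X) := by
    have : (f X * f X - f X) * (f X ^ 2 + f X + 1) = 0 := by linear_combination hpow
    exact sub_eq_zero.mp ((mul_eq_zero.mp this).resolve_right hne)
  obtain ⟨c, hc⟩ : ∃ c : ℤ, f X = c := by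
    rcases IsIdempotentElem.iff_eq_zero_or_one.mp hidem with h | h
    exacts [⟨0, by simp [h]⟩, ⟨1, by simp [h]⟩]
  have hfc : f = (Int.castRingHom F).comp (evalRingHom c) :=
    ringHom_ext (fun a => by simp) (by simp [hc])
  have hcast : Function.Surjective (Int.cast : ℤ → F) := by
    intro z
    obtain ⟨q, rfl⟩ := hf z
    exact ⟨q.eval c, by rw [hfc]; rfl⟩
  have := natCard_le_of_surjective_intCast 2 hcast
  omega

theorem ker_eq_span_C_two_X_sq_add_X_add_one {F : Type*} [Field F] [CharP F 2]
    (hF : Nat.card F = 4) {f : ℤ[X] →+* F} (hf : Function.Surjective f) :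
    RingHom.ker f = Ideal.span {C 2, X ^ 2 + X + 1} := by
  refine (Polynomial.isMaximal_span_C_two_X_sq_add_X_add_one.eq_of_le (RingHom.ker_ne_top f)
    ?_).symm
  rw [Ideal.span_le, Set.insert_subset_iff, Set.singleton_subset_iff]
  refine ⟨?_, ?_⟩
  · simpa [map_ofNat] using CharP.ofNat_eq_zero F 2
  · simpa using sq_add_self_add_one_eq_zero_of_surjective hF hf

theorem Ideal.span_two_le_of_comap_eq {S : Type*} [CommRing S] {P : Ideal S}
    (hc : P.comap (algebraMap ℤ S) = Ideal.span {2}) : Ideal.span {(2 : S)} ≤ P := by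
  have := Ideal.map_comap_le (f := algebraMap ℤ S) (K := P)
  rwa [hc, Ideal.map_span, Set.image_singleton, map_ofNat] at this

section NumberField

variable {K : Type*} [Field K] [NumberField K]

theorem surjective_quotientMk_comp_aeval_of_coprime_subindex (α : 𝓞 K) {n : ℕ}
    (hn : n.Coprime (subindex α)) :
    Function.Surjective
      ((Ideal.Quotient.mk (Ideal.span {(n : 𝓞 K)})).comp (aeval (R := ℤ) α).toRingHom) := by
  intro z
  obtain ⟨x, rfl⟩ := Ideal.Quotient.mk_surjective z
  obtain ⟨s, hs, y, rfl⟩ := AddSubgroup.exists_add_nsmul_of_coprime_index _ hn x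
  obtain ⟨q, rfl⟩ : s ∈ (aeval (R := ℤ) α).range := by
    rwa [← Algebra.adjoin_singleton_eq_range_aeval]
  refine ⟨q, Ideal.Quotient.eq.mpr ?_⟩
  simpa [nsmul_eq_mul] using Ideal.mul_mem_right y _ (Ideal.mem_span_singleton_self (n : 𝓞 K))

theorem comap_aeval_eq_span_C_two_X_sq_add_X_add_one {α : 𝓞 K}
    (hα : Function.Surjective
      ((Ideal.Quotient.mk (Ideal.span {(2 : 𝓞 K)})).comp (aeval (R := ℤ) α).toRingHom))
    {P : Ideal (𝓞 K)} [P.IsPrime] (hc : P.comap (algebraMap ℤ (𝓞 K)) = Ideal.span {2})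
    (hf : Ideal.inertiaDeg' (Ideal.span {(2 : ℤ)}) P = 2) :
    P.comap (aeval (R := ℤ) α).toRingHom = Ideal.span {C 2, X ^ 2 + X + 1} := by
  have h2P := Ideal.span_two_le_of_comap_eq hc
  have h2 : (2 : 𝓞 K) ∈ P := h2P (Ideal.mem_span_singleton_self 2)
  have : P.IsMaximal := Ideal.IsPrime.isMaximal inferInstance (fun h => by simp [h] at h2)
  have : CharP (𝓞 K ⧸ P) 2 := (CharP.charP_iff_prime_eq_zero Nat.prime_two).mpr
    (by rw [Nat.cast_ofNat, ← map_ofNat (Ideal.Quotient.mk P) 2]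
        exact Ideal.Quotient.eq_zero_iff_mem.mpr h2)
  let := Ideal.Quotient.field P
  have : P.LiesOver (Ideal.span {(2 : ℤ)}) := ⟨hc.symm⟩
  have hcard : Nat.card (𝓞 K ⧸ P) = 4 := by
    rw [← Submodule.cardQuot_apply, ← Ideal.absNorm_apply,
      Ideal.absNorm_eq_pow_inertiaDeg P Int.prime_two, hf]
    rfl
  have hsurj :
      Function.Surjective ((Ideal.Quotient.mk P).comp (aeval (R := ℤ) α).toRingHom) := by
    rw [← Ideal.Quotient.factor_comp_mk h2P, RingHom.comp_assoc]
    exact (Ideal.Quotient.factor_surjective h2P).comp hα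
  rw [← Ideal.mk_ker (I := P), RingHom.comap_ker]
  exact ker_eq_span_C_two_X_sq_add_X_add_one hcard hsurj

theorem two_dvd_subindex_of_ne {P Q : Ideal (𝓞 K)} [P.IsPrime] [Q.IsPrime] (hne : P ≠ Q)
    (hcP : P.comap (algebraMap ℤ (𝓞 K)) = Ideal.span {2})
    (hcQ : Q.comap (algebraMap ℤ (𝓞 K)) = Ideal.span {2})
    (hfP : Ideal.inertiaDeg' (Ideal.span {(2 : ℤ)}) P = 2)
    (hfQ : Ideal.inertiaDeg' (Ideal.span {(2 : ℤ)}) Q = 2) (α : 𝓞 K) : 2 ∣ subindex α := by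
  by_contra h
  have hα := surjective_quotientMk_comp_aeval_of_coprime_subindex α
    ((Nat.prime_two.coprime_iff_not_dvd).mpr h)
  rw [Nat.cast_ofNat] at hα
  refine hne (Ideal.eq_of_comap_eq_of_surjective_quotientMk_comp _ hα
    (Ideal.span_two_le_of_comap_eq hcP) (Ideal.span_two_le_of_comap_eq hcQ) ?_)
  rw [comap_aeval_eq_span_C_two_X_sq_add_X_add_one hα hcP hfP,
    comap_aeval_eq_span_C_two_X_sq_add_X_add_one hα hcQ hfQ]

theorem dvd_fieldIndex_of_forall_dvd_subindex {n : ℕ} (h : ∀ α : 𝓞 K, n ∣ subindex α) :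
    n ∣ fieldIndex K := by
  refine Int.natCast_dvd.mp (Ideal.mem_span_singleton.mp ?_)
  refine Ideal.span_le.mpr ?_ (Submodule.IsPrincipal.generator_mem _)
  rintro _ ⟨α, -, rfl⟩
  exact Ideal.mem_span_singleton.mpr (Int.natCast_dvd_natCast.mpr (h α))

theorem subindex_eq_one_of_adjoin_eq_top {α : 𝓞 K}
    (hα : Algebra.adjoin ℤ ({α} : Set (𝓞 K)) = ⊤) : subindex α = 1 := by
  rw [subindex, hα, Algebra.top_toSubmodule, Submodule.top_toAddSubgroup, AddSubgroup.index_top]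

theorem not_isMonogenic_of_forall_dvd_subindex {n : ℕ} (hn : n ≠ 1)
    (h : ∀ α : 𝓞 K, n ∣ subindex α) : ¬ IsMonogenic K := by
  rintro ⟨α, hα⟩
  exact hn (Nat.dvd_one.mp (subindex_eq_one_of_adjoin_eq_top hα ▸ h α))

end NumberField

theorem two_dvd_fieldIndex_of_three_primes_general (K : Type*) [Field K] [NumberField K]
    (P₁ P₂ : Ideal (𝓞 K))
    (h₁ : P₁.IsPrime) (h₂ : P₂.IsPrime)
    (hne₁ : P₁ ≠ P₂)
    (hc₁ : P₁.comap (algebraMap ℤ (𝓞 K)) = Ideal.span {(2 : ℤ)})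
    (hc₂ : P₂.comap (algebraMap ℤ (𝓞 K)) = Ideal.span {(2 : ℤ)})
    (hf₁ : Ideal.inertiaDeg' (Ideal.span {(2 : ℤ)}) P₁ = 2)
    (hf₂ : Ideal.inertiaDeg' (Ideal.span {(2 : ℤ)}) P₂ = 2) :
    2 ∣ fieldIndex K ∧ ¬ IsMonogenic K := by
  have h := two_dvd_subindex_of_ne (P := P₁) (Q := P₂) hne₁ hc₁ hc₂ hf₁ hf₂
  exact ⟨dvd_fieldIndex_of_forall_dvd_subindex h,
    not_isMonogenic_of_forall_dvd_subindex (by norm_num) h⟩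

/-- If a sextic number field has at least three distinct prime ideals above `2` with
residue degree `2`, then `2` divides the field index `i(K)`; in particular `K` is not
monogenic. -/
theorem two_dvd_fieldIndex_of_three_primes (K : Type*) [Field K] [NumberField K]
    (hdeg : Module.finrank ℚ K = 6)
    (P₁ P₂ P₃ : Ideal (𝓞 K))
    (h₁ : P₁.IsPrime) (h₂ : P₂.IsPrime) (h₃ : P₃.IsPrime)
    (hne₁ : P₁ ≠ P₂) (hne₂ : P₁ ≠ P₃) (hne₃ : P₂ ≠ P₃)
    (hc₁ : P₁.comap (algebraMap ℤ (𝓞 K)) = Ideal.span {(2 : ℤ)})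
    (hc₂ : P₂.comap (algebraMap ℤ (𝓞 K)) = Ideal.span {(2 : ℤ)})
    (hc₃ : P₃.comap (algebraMap ℤ (𝓞 K)) = Ideal.span {(2 : ℤ)})
    (hf₁ : Ideal.inertiaDeg' (Ideal.span {(2 : ℤ)}) P₁ = 2)
    (hf₂ : Ideal.inertiaDeg' (Ideal.span {(2 : ℤ)}) P₂ = 2)
    (hf₃ : Ideal.inertiaDeg' (Ideal.span {(2 : ℤ)}) P₃ = 2) :
    2 ∣ fieldIndex K ∧ ¬ IsMonogenic K :=
  two_dvd_fieldIndex_of_three_primes_general K P₁ P₂ h₁ h₂ hne₁ hc₁ hc₂ hf₁ hf₂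
end

section
/- Let K be a sextic number field defined by an irreducible trinomial x^6 + a x^5 + b. If ℤ[α] is the full ring of integers of K for a root α, then b is squarefree. -/
open NumberField Polynomial

/-- If `K` is a sextic field defined by the irreducible trinomial `x^6 + a x^5 + b`
with root `α`, and `ℤ[α]` is the full ring of integers of `K`, then `b` is squarefree. -/
theorem squarefree_of_monogenic (a b : ℤ)
    (hirr : Irreducible ((X ^ 6 + C a * X ^ 5 + C b : Polynomial ℤ).map
      (Int.castRingHom ℚ)))
    (K : Type*) [Field K] [NumberField K] (α : 𝓞 K)
    (hroot : aeval α (X ^ 6 + C a * X ^ 5 + C b : Polynomial ℤ) = 0)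
    (hgen : Algebra.adjoin ℚ ({(α : K)} : Set K) = ⊤)
    (hZ : Algebra.adjoin ℤ ({α} : Set (𝓞 K)) = ⊤) :
    Squarefree b := by
  by_contra hsf
  rw [← Int.squarefree_natAbs, Nat.squarefree_iff_prime_squarefree] at hsf
  push_neg at hsf
  obtain ⟨p, hp, hpd⟩ := hsf
  have hpn : p.Prime := hp
  haveI : Fact p.Prime := ⟨hpn⟩
  have hp2 : ((p : ℤ))^2 ∣ b := by
    have h1 : ((p*p : ℕ) : ℤ) ∣ (b.natAbs : ℤ) := Int.natCast_dvd_natCast.mpr hpd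
    have h2 : ((b.natAbs : ℤ)) ∣ b := Int.natAbs_dvd.mpr dvd_rfl
    have := dvd_trans h1 h2
    push_cast at this
    simpa [pow_two] using this
  obtain ⟨c, hc⟩ := hp2
  have hpb : (p : ℤ) ∣ b := dvd_trans ⟨p, by push_cast; ring⟩ ⟨c, hc⟩
  -- the root relation in 𝓞 K and in K
  have hroot' : α^6 + (a : 𝓞 K) * α^5 + (b : 𝓞 K) = 0 := by
    simpa using hroot
  have hrel : (α : K)^6 + (a : K) * (α : K)^5 + (b : K) = 0 := by
    have := congrArg (algebraMap (𝓞 K) K) hroot'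
    simp only [map_add, map_mul, map_pow, map_intCast, map_zero] at this
    exact this
  have hpK : ((p : ℤ) : K) ≠ 0 := by
    have : (p : ℤ) ≠ 0 := by exact_mod_cast hpn.ne_zero
    exact_mod_cast this
  have hcK : (b : K) = ((p : ℤ) : K)^2 * (c : K) := by exact_mod_cast congrArg (Int.cast : ℤ → K) hc
  set u : K := ((α : K)^5 + (a : K) * (α : K)^4) / ((p : ℤ) : K) with hu_def
  set w : 𝓞 K := -(c : 𝓞 K) * α^4 - (a : 𝓞 K) * (c : 𝓞 K) * α^3 with hw_def
  have hu2 : u^2 = algebraMap (𝓞 K) K w := by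
    rw [hu_def, hw_def, div_pow, div_eq_iff (pow_ne_zero 2 hpK)]
    simp only [map_sub, map_mul, map_neg, map_pow, map_intCast]
    linear_combination ((α : K)^4 + (a : K) * (α : K)^3) * hrel -
      ((α : K)^4 + (a : K) * (α : K)^3) * hcK
  have hintu : IsIntegral ℤ u :=
    IsIntegral.of_pow (by norm_num) (hu2 ▸ RingOfIntegers.isIntegral_coe w)
  set β : 𝓞 K := ⟨u, hintu⟩ with hβ_def
  have hβ : β ∈ Algebra.adjoin ℤ ({α} : Set (𝓞 K)) := hZ.symm ▸ Algebra.mem_top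
  rw [Algebra.adjoin_singleton_eq_range_aeval] at hβ
  obtain ⟨P, hP⟩ := hβ
  have hPK : ((p : ℤ) : K) * aeval (α : K) P = (α : K)^5 + (a : K) * (α : K)^4 := by
    have h1 : aeval (α : K) P = u := by
      rw [show ((α : K)) = algebraMap (𝓞 K) K α from rfl, aeval_algebraMap_apply,
        show (aeval α) P = β from hP]
      rfl
    rw [h1, hu_def, mul_div_cancel₀ _ hpK]
  set Q : Polynomial ℤ := C (p : ℤ) * P - (X^5 + C a * X^4) with hQ_def
  have hQ0 : aeval (α : K) Q = 0 := by
    simp only [hQ_def, map_sub, map_mul, map_add, map_pow, aeval_X, aeval_C,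
      algebraMap_int_eq, eq_intCast, map_intCast]
    linear_combination hPK
  set F : Polynomial ℤ := X ^ 6 + C a * X ^ 5 + C b with hF_def
  have hFm : F.Monic := by
    unfold F; monicity!
  have hmin : minpoly ℚ ((α : K)) = F.map (Int.castRingHom ℚ) := by
    refine (minpoly.eq_of_irreducible_of_monic hirr ?_ (hFm.map _)).symm
    rw [show (Int.castRingHom ℚ) = algebraMap ℤ ℚ from rfl, aeval_map_algebraMap,
      show ((α : K)) = algebraMap (𝓞 K) K α from rfl, aeval_algebraMap_apply, hroot, map_zero]
  have hdvdQ : F.map (Int.castRingHom ℚ) ∣ Q.map (Int.castRingHom ℚ) := by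
    rw [← hmin]
    exact minpoly.dvd ℚ _ (by
      rw [show (Int.castRingHom ℚ) = algebraMap ℤ ℚ from rfl, aeval_map_algebraMap]
      exact hQ0)
  have hdvd : F ∣ Q :=
    (Polynomial.map_dvd_map (Int.castRingHom ℚ) Int.cast_injective hFm).mp hdvdQ
  obtain ⟨q, hq⟩ := hdvd
  have hmap := congrArg (Polynomial.map (Int.castRingHom (ZMod p))) hq
  rw [Polynomial.map_mul] at hmap
  have hp0 : (((p : ℤ) : ZMod p)) = 0 := by
    simpa using (ZMod.natCast_self p)
  have hb0 : ((b : ZMod p)) = 0 := by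
    rw [ZMod.intCast_zmod_eq_zero_iff_dvd]
    exact_mod_cast hpb
  have hQmap : Q.map (Int.castRingHom (ZMod p)) =
      -(X^5 + C ((a : ZMod p)) * X^4) := by
    rw [hQ_def]
    simp only [Polynomial.map_sub, Polynomial.map_add, Polynomial.map_mul,
      Polynomial.map_pow, Polynomial.map_X, Polynomial.map_C]
    rw [show (Int.castRingHom (ZMod p)) ((p : ℕ) : ℤ) = 0 by simpa using hp0]
    simp [eq_intCast]
  have hFmap : F.map (Int.castRingHom (ZMod p)) =
      X^6 + C ((a : ZMod p)) * X^5 := by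
    rw [hF_def]
    simp only [Polynomial.map_add, Polynomial.map_mul,
      Polynomial.map_pow, Polynomial.map_X, Polynomial.map_C]
    rw [show (Int.castRingHom (ZMod p)) b = 0 by simpa using hb0]
    simp [eq_intCast]
  rw [hQmap, hFmap] at hmap
  set qq := q.map (Int.castRingHom (ZMod p)) with hqq_def
  have hgm : (X^6 + C ((a : ZMod p)) * X^5 : (ZMod p)[X]).Monic := by monicity!
  by_cases hqq0 : qq = 0
  · rw [hqq0, mul_zero] at hmap
    have := congrArg (fun r : (ZMod p)[X] => r.coeff 5) hmap
    simp at this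
  · have h1 : (-(X^5 + C ((a : ZMod p)) * X^4) : (ZMod p)[X]).natDegree ≤ 5 := by
      compute_degree
    have h2 : ((X^6 + C ((a : ZMod p)) * X^5 : (ZMod p)[X]) * qq).natDegree =
        6 + qq.natDegree := by
      rw [natDegree_mul hgm.ne_zero hqq0]
      congr 1
      compute_degree!
    rw [hmap, h2] at h1
    omega
end

section
/- Let K be a sextic number field defined by an irreducible trinomial x^6 + a x^5 + b with 2 ∣ a and 2 ∤ b. If ℤ[α] is the ring of integers of K, then (a, b) ≡ (0, 1) (mod 4) or (a, b) ≡ (2, 3) (mod 4). -/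
open NumberField Polynomial

/-! Modulo 2 the trinomial is `(x ^ 3 + 1) ^ 2`. In the two excluded residue classes mod 4 an
element `g(α) / 2`, with `g` of degree `< 6` and odd constant term, is a root of a monic quadratic
over `ℤ[α]`: `(α ^ 3 + 1) / 2` when `(a, b) ≡ (0, 3)`, `(1 + α + ⋯ + α ^ 5) / 2` when
`(a, b) ≡ (2, 1)`. It is therefore integral, so it lies in `𝓞 K = ℤ[α] ≅ ℤ[x] / (F)`, and then
`F ∣ g` modulo 2, which is impossible for degree reasons. -/

theorem IsIntegrallyClosed.dvd_of_sq_add_mul_add_eq_zero {R : Type*} [CommRing R] [IsDomain R]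
    [IsIntegrallyClosed R] {x n c d : R} (h : x ^ 2 + n * c * x + n ^ 2 * d = 0) : n ∣ x := by
  rcases eq_or_ne n 0 with rfl | hn
  · simp_all
  have hinj := IsFractionRing.injective R (FractionRing R)
  have hn' : algebraMap R (FractionRing R) n ≠ 0 := (map_ne_zero_iff _ hinj).mpr hn
  have hy : IsIntegral R (algebraMap R (FractionRing R) x / algebraMap R (FractionRing R) n) := by
    refine ⟨X ^ 2 + C c * X + C d, by monicity!, ?_⟩
    have := congrArg (algebraMap R (FractionRing R)) h
    simp only [map_add, map_mul, map_pow, map_zero] at this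
    simp only [eval₂_add, eval₂_mul, eval₂_pow, eval₂_X, eval₂_C]
    field_simp
    linear_combination this
  obtain ⟨z, hz⟩ := IsIntegrallyClosed.isIntegral_iff.mp hy
  exact ⟨z, hinj (by rw [map_mul, hz, mul_div_cancel₀ _ hn'])⟩

theorem IsIntegrallyClosed.minpoly_eq_of_irreducible {R S : Type*} [CommRing R] [IsDomain R]
    [IsIntegrallyClosed R] [CommRing S] [IsDomain S] [Algebra R S] [Module.IsTorsionFree R S]
    {s : S} {P : R[X]} (hmo : P.Monic) (hirr : Irreducible P) (hP : aeval s P = 0) :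
    P = minpoly R s :=
  have hs : IsIntegral R s := ⟨P, hmo, hP⟩
  eq_of_monic_of_associated hmo (minpoly.monic hs)
    ((minpoly.irreducible hs).associated_of_dvd hirr (minpoly.isIntegrallyClosed_dvd hs hP)).symm

theorem map_eq_zero_of_dvd_aeval {A : Type*} [CommRing A] [IsDomain A] [Module.IsTorsionFree ℤ A]
    {α : A} (hα : IsIntegral ℤ α) (hgen : Algebra.adjoin ℤ {α} = ⊤) (p : ℕ) [Fact p.Prime]
    {g : ℤ[X]} (hg : g.natDegree < (minpoly ℤ α).natDegree) (hdvd : (p : A) ∣ aeval α g) :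
    g.map (Int.castRingHom (ZMod p)) = 0 := by
  obtain ⟨β, hβ⟩ := hdvd
  obtain ⟨q, rfl⟩ : β ∈ Set.range (aeval (R := ℤ) α) := by
    rw [← AlgHom.coe_range, ← Algebra.adjoin_singleton_eq_range_aeval, hgen]
    trivial
  have hroot : aeval α (g - (p : ℤ[X]) * q) = 0 := by simp [hβ]
  have hmap :=
    Polynomial.map_dvd (Int.castRingHom (ZMod p)) (minpoly.isIntegrallyClosed_dvd hα hroot)
  rw [Polynomial.map_sub, Polynomial.map_mul, Polynomial.map_natCast, CharP.cast_eq_zero, zero_mul,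
    sub_zero] at hmap
  refine eq_zero_of_dvd_of_natDegree_lt hmap ?_
  rw [(minpoly.monic hα).natDegree_map]
  exact natDegree_map_le.trans_lt hg

theorem two_dvd_cube_add_one {R : Type*} [CommRing R] [IsDomain R] [IsIntegrallyClosed R]
    {α u v : R} (h : α ^ 6 + 4 * u * α ^ 5 + (4 * v + 3) = 0) : 2 ∣ α ^ 3 + 1 :=
  IsIntegrallyClosed.dvd_of_sq_add_mul_add_eq_zero (c := -1) (d := u * α ^ 5 + v + 1)
    (by linear_combination h)

-- `(1 + x + ⋯ + x ^ 5) ^ 2 ≡ (x ^ 4 - x ^ 2 - 2 * x + 1) * (x ^ 6 + 2 * x ^ 5 + 1) [mod 4]`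
theorem two_dvd_geom_sum_six {R : Type*} [CommRing R] [IsDomain R] [IsIntegrallyClosed R]
    {α u v : R} (h : α ^ 6 + (4 * u + 2) * α ^ 5 + (4 * v + 1) = 0) :
    2 ∣ 1 + α + α ^ 2 + α ^ 3 + α ^ 4 + α ^ 5 :=
  IsIntegrallyClosed.dvd_of_sq_add_mul_add_eq_zero (c := 0)
    (d := (α ^ 4 - α ^ 2 - 2 * α + 1) * (u * α ^ 5 + v) -
      (α ^ 8 + 2 * α ^ 7 + 2 * α ^ 6 + α ^ 5 + α ^ 4 + α ^ 3 + α ^ 2 + α))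
    (by linear_combination (α ^ 4 - α ^ 2 - 2 * α + 1) * h)

theorem congruence_of_monogenic_general (a b : ℤ)
    (hirr : Irreducible ((X ^ 6 + C a * X ^ 5 + C b : Polynomial ℤ).map
      (Int.castRingHom ℚ)))
    (K : Type*) [Field K] [NumberField K] (α : 𝓞 K)
    (hroot : aeval α (X ^ 6 + C a * X ^ 5 + C b : Polynomial ℤ) = 0)
    (hZ : Algebra.adjoin ℤ ({α} : Set (𝓞 K)) = ⊤)
    (ha : 2 ∣ a) (hb : ¬ (2 ∣ b)) :
    (a % 4 = 0 ∧ b % 4 = 1) ∨ (a % 4 = 2 ∧ b % 4 = 3) := by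
  have hmo : (X ^ 6 + C a * X ^ 5 + C b : ℤ[X]).Monic := by monicity!
  have hmin := IsIntegrallyClosed.minpoly_eq_of_irreducible hmo
    (hmo.irreducible_of_irreducible_map _ _ hirr) hroot
  have hdeg : (minpoly ℤ α).natDegree = 6 := by rw [← hmin]; compute_degree!
  have hα : α ^ 6 + a * α ^ 5 + b = 0 := by simpa using hroot
  have not_two_dvd {g : ℤ[X]} (hg : g.natDegree < 6) (hg0 : g.coeff 0 = 1) :
      ¬ (2 : 𝓞 K) ∣ aeval α g := fun h2 => by
    have := congrArg (coeff · 0)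
      (map_eq_zero_of_dvd_aeval ⟨_, hmo, hroot⟩ hZ 2 (hdeg ▸ hg) (by exact_mod_cast h2))
    simp [hg0] at this
  by_contra hcon
  rcases (by omega : (a % 4 = 0 ∧ b % 4 = 3) ∨ (a % 4 = 2 ∧ b % 4 = 1)) with
    ⟨ha4, hb4⟩ | ⟨ha4, hb4⟩
  · obtain ⟨u, rfl⟩ : ∃ u, a = 4 * u := ⟨a / 4, by omega⟩
    obtain ⟨v, rfl⟩ : ∃ v, b = 4 * v + 3 := ⟨b / 4, by omega⟩
    refine not_two_dvd (g := X ^ 3 + 1) (by compute_degree!) (by simp) ?_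
    simpa using two_dvd_cube_add_one (u := (u : 𝓞 K)) (v := v) (by push_cast at hα; exact hα)
  · obtain ⟨u, rfl⟩ : ∃ u, a = 4 * u + 2 := ⟨a / 4, by omega⟩
    obtain ⟨v, rfl⟩ : ∃ v, b = 4 * v + 1 := ⟨b / 4, by omega⟩
    refine not_two_dvd (g := 1 + X + X ^ 2 + X ^ 3 + X ^ 4 + X ^ 5) (by compute_degree!) (by simp) ?_
    simpa using two_dvd_geom_sum_six (u := (u : 𝓞 K)) (v := v) (by push_cast at hα; exact hα)

/-- If `K` is a sextic field defined by the irreducible trinomial `x^6 + a x^5 + b`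
with root `α`, `ℤ[α]` is the full ring of integers, `2 ∣ a` and `2 ∤ b`, then
`(a, b) ≡ (0, 1)` or `(2, 3) (mod 4)`. -/
theorem congruence_of_monogenic (a b : ℤ)
    (hirr : Irreducible ((X ^ 6 + C a * X ^ 5 + C b : Polynomial ℤ).map
      (Int.castRingHom ℚ)))
    (K : Type*) [Field K] [NumberField K] (α : 𝓞 K)
    (hroot : aeval α (X ^ 6 + C a * X ^ 5 + C b : Polynomial ℤ) = 0)
    (hgen : Algebra.adjoin ℚ ({(α : K)} : Set K) = ⊤)
    (hZ : Algebra.adjoin ℤ ({α} : Set (𝓞 K)) = ⊤)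
    (ha : 2 ∣ a) (hb : ¬ (2 ∣ b)) :
    (a % 4 = 0 ∧ b % 4 = 1) ∨ (a % 4 = 2 ∧ b % 4 = 3) :=
  congruence_of_monogenic_general a b hirr K α hroot hZ ha hb
end
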